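/- arXiv:2304.01595 — 5 statements merged into one kernel-verified Lean document; each statement's English description precedes it below -/
import Mathlib

section
/- There exists a constant C_k > 0, depending only on k > 0, such that for all t, r > 0, ( (cosh(t-r))^{-k} − (cosh(t+r))^{-k} ) / (2k · sinh t · sinh r) ≤ C_k / ( cosh t · cosh r · (cosh(t-r))^{k} ). -/
/-!
With `P = cosh t cosh r` and `S = sinh t sinh r` we have `cosh (t ∓ r) = P ∓ S`. Writing
`a = cosh (t - r) ≤ b = cosh (t + r)`, the numerator is `a⁻ᵏ (1 - (a / b)ᵏ)`, and the elementary
bound `1 - uᵏ ≤ max k 1 · (1 - u)` on `[0, 1]` turns it into `max k 1 · 2S / (b aᵏ)`. The factor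
`S` cancels against the denominator, and `b ≥ P` gives the claim with `C = max k 1 / k`.
-/

open Real

theorem one_sub_rpow_le_max_mul_one_sub {u k : ℝ} (hu₀ : 0 ≤ u) (hu₁ : u ≤ 1) (hk : 0 ≤ k) :
    1 - u ^ k ≤ max k 1 * (1 - u) := by
  rcases le_total 1 k with hk₁ | hk₁
  · have bernoulli := one_add_mul_self_le_rpow_one_add (s := u - 1) (by linarith) hk₁
    rw [add_sub_cancel] at bernoulli
    rw [max_eq_left hk₁]
    linarith
  · have h : u ^ (1 : ℝ) ≤ u ^ k := rpow_le_rpow_of_exponent_ge' hu₀ hu₁ hk hk₁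
    rw [rpow_one] at h
    rw [max_eq_right hk₁]
    linarith

theorem rpow_neg_sub_rpow_neg_le {a b k : ℝ} (ha : 0 < a) (hab : a ≤ b) (hk : 0 ≤ k) :
    a ^ (-k) - b ^ (-k) ≤ max k 1 * (b - a) / (b * a ^ k) := by
  have hb : 0 < b := ha.trans_le hab
  have hu := one_sub_rpow_le_max_mul_one_sub (div_nonneg ha.le hb.le)
    ((div_le_one hb).2 hab) hk
  calc a ^ (-k) - b ^ (-k) = (1 - (a / b) ^ k) / a ^ k := by
        rw [rpow_neg ha.le, rpow_neg hb.le, div_rpow ha.le hb.le]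
        field_simp
    _ ≤ max k 1 * (1 - a / b) / a ^ k := by gcongr
    _ = max k 1 * (b - a) / (b * a ^ k) := by field_simp

theorem spherical_mean_theta_bound (k : ℝ) (hk : 0 < k) :
    ∃ C : ℝ, 0 < C ∧ ∀ t r : ℝ, 0 < t → 0 < r →
      ((Real.cosh (t - r)) ^ (-k) - (Real.cosh (t + r)) ^ (-k))
          / (2 * k * Real.sinh t * Real.sinh r)
        ≤ C / (Real.cosh t * Real.cosh r * (Real.cosh (t - r)) ^ k) := by
  refine ⟨max k 1 / k, by positivity, fun t r ht hr => ?_⟩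
  have hS : 0 < sinh t * sinh r := mul_pos (sinh_pos_iff.2 ht) (sinh_pos_iff.2 hr)
  have hdiff : cosh (t + r) - cosh (t - r) = 2 * (sinh t * sinh r) := by
    rw [cosh_add, cosh_sub]; ring
  have hPb : cosh t * cosh r ≤ cosh (t + r) := by rw [cosh_add]; linarith
  have hab : cosh (t - r) ≤ cosh (t + r) := by linarith
  calc ((cosh (t - r)) ^ (-k) - (cosh (t + r)) ^ (-k)) / (2 * k * sinh t * sinh r)
      ≤ max k 1 * (cosh (t + r) - cosh (t - r)) / (cosh (t + r) * cosh (t - r) ^ k)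
          / (2 * k * sinh t * sinh r) := by
        gcongr
        exact rpow_neg_sub_rpow_neg_le (cosh_pos (t - r)) hab hk.le
    _ = max k 1 / k / (cosh (t + r) * cosh (t - r) ^ k) := by
        rw [hdiff]; field_simp
    _ ≤ max k 1 / k / (cosh t * cosh r * cosh (t - r) ^ k) := by gcongr
end

section
/- Let p > 3 and h ∈ (1, p−2). For every δ > 0 there exists ε₀ > 0 such that for all ε ∈ (0, ε₀] and all t ≥ r with 0 < r ≤ min(1,t): ∫_{t-r}^{t+r} ∫_{-β}^{(t-r)/2} ( ln(1/ε) + β − α )^{1-p} ⟨α⟩^{-h} dα dβ ≤ δ · r · ⟨t−r⟩^{-h}, where ⟨α⟩ = √(1+α²). -/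
open intervalIntegral Filter

/-! On the region of integration `β - α ≥ (t - r)/2` and `⟨α⟩ ≥ 1`, so the integrand is at most
`(log (1/ε) + (t - r)/2) ^ (1 - p)`, while the region has area at most `2r ((3/2)(t - r) + 2)`.
Writing `L = log (1/ε)` and `u = L + (t - r)/2`, the resulting bound `r (3(t - r) + 4) u ^ (1 - p)`
beats `⟨t - r⟩ ^ (-h) ≥ (1 + (t - r)) ^ (-h)` by the factor `u ^ (h + 2 - p) ≤ L ^ (h + 2 - p)`,
which is small for small `ε` because `h < p - 2`. -/

lemma sqrt_one_add_sq_le_one_add {x : ℝ} (hx : 0 ≤ x) : √(1 + x ^ 2) ≤ 1 + x :=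
  Real.sqrt_le_iff.2 ⟨by linarith, by nlinarith⟩

lemma norm_rpow_mul_sqrt_one_add_sq_rpow_le {u x α p h : ℝ} (hu : 0 < u) (hux : u ≤ x)
    (hp : 1 ≤ p) (hh : 0 ≤ h) :
    ‖x ^ (1 - p) * √(1 + α ^ 2) ^ (-h)‖ ≤ u ^ (1 - p) := by
  have hbracket : 1 ≤ √(1 + α ^ 2) := Real.one_le_sqrt.2 (by nlinarith)
  have hx : 0 ≤ x ^ (1 - p) := Real.rpow_nonneg (hu.le.trans hux) _
  have hweight : 0 ≤ √(1 + α ^ 2) ^ (-h) := Real.rpow_nonneg (Real.sqrt_nonneg _) _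
  rw [Real.norm_eq_abs, abs_of_nonneg (mul_nonneg hx hweight)]
  calc x ^ (1 - p) * √(1 + α ^ 2) ^ (-h) ≤ u ^ (1 - p) * 1 :=
        mul_le_mul (Real.rpow_le_rpow_of_nonpos hu hux (by linarith))
          (Real.rpow_le_one_of_one_le_of_nonpos hbracket (by linarith)) hweight
          (Real.rpow_nonneg hu.le _)
    _ = u ^ (1 - p) := mul_one _

lemma integral_integral_rpow_mul_sqrt_one_add_sq_rpow_le {L t r p h : ℝ} (hL : 0 < L)
    (hr : 0 ≤ r) (hr1 : r ≤ 1) (hrt : r ≤ t) (hp : 1 ≤ p) (hh : 0 ≤ h) :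
    (∫ β in (t - r)..(t + r), ∫ α in (-β)..((t - r) / 2),
        (L + β - α) ^ (1 - p) * √(1 + α ^ 2) ^ (-h))
      ≤ r * ((3 * (t - r) + 4) * (L + (t - r) / 2) ^ (1 - p)) := by
  set u := L + (t - r) / 2 with hu_def
  have hu : 0 < u := by positivity
  have hinner : ∀ β ∈ Set.uIoc (t - r) (t + r),
      ‖∫ α in (-β)..((t - r) / 2), (L + β - α) ^ (1 - p) * √(1 + α ^ 2) ^ (-h)‖
        ≤ u ^ (1 - p) * (3 * (t - r) / 2 + 2) := by
    intro β hβ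
    rw [Set.uIoc_of_le (by linarith)] at hβ
    refine (norm_integral_le_of_norm_le_const (C := u ^ (1 - p)) fun α hα => ?_).trans ?_
    · rw [Set.uIoc_of_le (by linarith [hβ.1])] at hα
      exact norm_rpow_mul_sqrt_one_add_sq_rpow_le hu (by linarith [hα.2, hβ.1, hu_def]) hp hh
    · gcongr
      rw [abs_of_nonneg (by linarith [hβ.1])]
      linarith [hβ.2]
  calc _ ≤ ‖∫ β in (t - r)..(t + r), ∫ α in (-β)..((t - r) / 2),
          (L + β - α) ^ (1 - p) * √(1 + α ^ 2) ^ (-h)‖ := le_abs_self _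
    _ ≤ u ^ (1 - p) * (3 * (t - r) / 2 + 2) * |t + r - (t - r)| :=
        norm_integral_le_of_norm_le_const hinner
    _ = r * ((3 * (t - r) + 4) * u ^ (1 - p)) := by
        rw [show t + r - (t - r) = 2 * r by ring, abs_of_nonneg (by linarith)]
        ring

lemma eventually_mul_rpow_one_sub_le {p h δ : ℝ} (hδ : 0 < δ) (hh : 0 ≤ h) (hhp : h < p - 2) :
    ∀ᶠ L in atTop, ∀ s : ℝ, 0 ≤ s →
      (3 * s + 4) * (L + s / 2) ^ (1 - p) ≤ δ * (1 + s) ^ (-h) := by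
  have hq : 0 < p - 2 - h := by linarith
  have hsmall : ∀ᶠ L in atTop, 2 ^ (h + 3) * L ^ (-(p - 2 - h)) < δ := by
    refine Tendsto.eventually_lt_const hδ ?_
    simpa using (tendsto_rpow_neg_atTop hq).const_mul ((2 : ℝ) ^ (h + 3))
  filter_upwards [eventually_ge_atTop 1, hsmall] with L hL1 hLδ s hs
  set u := L + s / 2 with hu_def
  have hu : 0 < u := by positivity
  have hs1 : 0 < 1 + s := by linarith
  -- `(1 + s) ^ (h + 1) ≤ (2u) ^ (h + 1)` trades the weight for powers of `u`.
  calc (3 * s + 4) * u ^ (1 - p)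
      ≤ 4 * ((1 + s) ^ (h + 1) * (1 + s) ^ (-h)) * u ^ (1 - p) := by
        rw [← Real.rpow_add hs1, show h + 1 + -h = 1 by ring, Real.rpow_one]
        gcongr
        linarith
    _ ≤ 4 * ((2 * u) ^ (h + 1) * (1 + s) ^ (-h)) * u ^ (1 - p) := by
        gcongr
        linarith [hu_def]
    _ = 2 ^ (h + 3) * u ^ (-(p - 2 - h)) * (1 + s) ^ (-h) := by
        have h2 : (2 : ℝ) ^ (h + 3) = 2 ^ (h + 1) * 4 := by
          rw [show h + 3 = (h + 1) + 2 by ring, Real.rpow_add two_pos]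
          norm_num
        have hq' : u ^ (-(p - 2 - h)) = u ^ (h + 1) * u ^ (1 - p) := by
          rw [← Real.rpow_add hu]
          congr 1
          ring
        rw [Real.mul_rpow zero_le_two hu.le, h2, hq']
        ring
    _ ≤ 2 ^ (h + 3) * L ^ (-(p - 2 - h)) * (1 + s) ^ (-h) := by
        have hpow : u ^ (-(p - 2 - h)) ≤ L ^ (-(p - 2 - h)) :=
          Real.rpow_le_rpow_of_nonpos (by linarith) (by linarith [hu_def]) (neg_nonpos.2 hq.le)
        gcongr
    _ ≤ δ * (1 + s) ^ (-h) := by gcongr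

theorem claim_case1_general (p h : ℝ) (hh1 : 1 < h) (hh2 : h < p - 2) :
    ∀ δ : ℝ, 0 < δ → ∃ ε₀ : ℝ, 0 < ε₀ ∧ ∀ ε : ℝ, 0 < ε → ε ≤ ε₀ →
      ∀ t r : ℝ, 0 < r → r ≤ 1 → r ≤ t →
        (∫ β in (t - r)..(t + r), ∫ α in (-β)..((t - r)/2),
            (Real.log (1/ε) + β - α) ^ (1 - p) * (Real.sqrt (1 + α^2)) ^ (-h))
          ≤ δ * r * (Real.sqrt (1 + (t - r)^2)) ^ (-h) := by
  intro δ hδ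
  obtain ⟨L₀, hL₀⟩ := eventually_atTop.1 ((eventually_gt_atTop 0).and
    (eventually_mul_rpow_one_sub_le (p := p) hδ (by linarith) hh2))
  refine ⟨Real.exp (-L₀), Real.exp_pos _, fun ε hε hεε₀ t r hr hr1 hrt => ?_⟩
  have hL : L₀ ≤ Real.log (1 / ε) := by
    rw [one_div, Real.log_inv, le_neg]
    simpa using Real.log_le_log hε hεε₀
  obtain ⟨hLpos, hdecay⟩ := hL₀ _ hL
  have hs : 0 ≤ t - r := by linarith
  calc _ ≤ r * ((3 * (t - r) + 4) * (Real.log (1 / ε) + (t - r) / 2) ^ (1 - p)) :=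
        integral_integral_rpow_mul_sqrt_one_add_sq_rpow_le hLpos hr.le hr1 hrt
          (by linarith) (by linarith)
    _ ≤ r * (δ * (1 + (t - r)) ^ (-h)) := mul_le_mul_of_nonneg_left (hdecay _ hs) hr.le
    _ ≤ δ * r * √(1 + (t - r) ^ 2) ^ (-h) := by
        have hweight : (1 + (t - r)) ^ (-h) ≤ √(1 + (t - r) ^ 2) ^ (-h) :=
          Real.rpow_le_rpow_of_nonpos (Real.sqrt_pos.2 (by positivity))
            (sqrt_one_add_sq_le_one_add hs) (by linarith)
        rw [← mul_assoc, mul_comm r δ]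
        gcongr

/-- ⟨α⟩ = √(1+α²), Case 1: r ≤ min(1,t). -/
theorem claim_case1 (p h : ℝ) (hp : 3 < p) (hh1 : 1 < h) (hh2 : h < p - 2) :
    ∀ δ : ℝ, 0 < δ → ∃ ε₀ : ℝ, 0 < ε₀ ∧ ∀ ε : ℝ, 0 < ε → ε ≤ ε₀ →
      ∀ t r : ℝ, 0 < r → r ≤ 1 → r ≤ t →
        (∫ β in (t - r)..(t + r), ∫ α in (-β)..((t - r)/2),
            (Real.log (1/ε) + β - α) ^ (1 - p) * (Real.sqrt (1 + α^2)) ^ (-h))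
          ≤ δ * r * (Real.sqrt (1 + (t - r)^2)) ^ (-h) :=
  claim_case1_general p h hh1 hh2
end

section
/- Let p > 3 and h ∈ (1, p−2). For every δ > 0 there exists ε₀ > 0 such that for all ε ∈ (0, ε₀] and all t ≥ r ≥ 1: ∫_{t-r}^{t+r} ∫_{(t-r)/2}^{t-r} ( ln(1/ε) + β − α )^{1-p} ⟨α⟩^{-h} dα dβ ≤ δ · ⟨t−r⟩^{-h}. -/
/-!
On the inner domain `(t - r)/2 ≤ α ≤ t - r` the weight `⟨α⟩^{-h}` is at most `2^h ⟨t - r⟩^{-h}`.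
With `L = ln(1/ε)`, what remains are two explicit power integrals:
the α-integral is at most `(L + β - (t - r))^{2-p} / (p - 2)`, and integrating this in β over
`[t - r, ∞)` gives `L^{3-p} / ((p - 2)(p - 3))`, which tends to `0` as `ε → 0` because `p > 3`.
-/

open Real Set Filter Topology intervalIntegral

lemma intervalIntegral_mono_of_nonneg {f g : ℝ → ℝ} {a b : ℝ} (hab : a ≤ b)
    (hf : ∀ x ∈ Ioc a b, 0 ≤ f x) (hfg : ∀ x ∈ Ioc a b, f x ≤ g x)
    (hg : IntervalIntegrable g MeasureTheory.volume a b) :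
    ∫ x in a..b, f x ≤ ∫ x in a..b, g x := by
  simpa only [integral_of_le hab] using MeasureTheory.setIntegral_mono_of_nonneg hf hfg hg.1

lemma integral_rpow_le_of_lt_neg_one {s x y : ℝ} (hs : s < -1) (hx : 0 < x) (hxy : x ≤ y) :
    ∫ u in x..y, u ^ s ≤ x ^ (s + 1) / -(s + 1) := by
  rw [integral_rpow (Or.inr ⟨hs.ne, fun h0 => ?_⟩)]
  · have hy : 0 ≤ y ^ (s + 1) := rpow_nonneg (hx.le.trans hxy) _
    rw [← neg_div_neg_eq, neg_sub]
    exact div_le_div_of_nonneg_right (by linarith) (by linarith)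
  · rw [uIcc_of_le hxy] at h0
    linarith [h0.1]

lemma integral_sub_rpow_le {p a b c : ℝ} (hp : 2 < p) (hab : a ≤ b) (hbc : b < c) :
    ∫ α in a..b, (c - α) ^ (1 - p) ≤ (c - b) ^ (2 - p) / (p - 2) := by
  rw [integral_comp_sub_left (fun u => u ^ (1 - p)) c]
  convert integral_rpow_le_of_lt_neg_one (s := 1 - p) (by linarith) (sub_pos.2 hbc)
    (by linarith : c - b ≤ c - a) using 3 <;> ring

lemma integral_add_sub_rpow_le {p L a b : ℝ} (hp : 3 < p) (hL : 0 < L) (hab : a ≤ b) :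
    ∫ β in a..b, (L + β - a) ^ (2 - p) ≤ L ^ (3 - p) / (p - 3) := by
  simp_rw [show ∀ β, L + β - a = β + (L - a) from fun β => by ring]
  rw [integral_comp_add_right (fun u => u ^ (2 - p)), show a + (L - a) = L by ring]
  convert integral_rpow_le_of_lt_neg_one (s := 2 - p) (by linarith) hL
    (by linarith : L ≤ b + (L - a)) using 3 <;> ring

lemma rpow_neg_sqrt_one_add_sq_le {h b α : ℝ} (hh : 0 ≤ h) (hb : 0 ≤ b) (hα : b / 2 ≤ α) :
    √(1 + α ^ 2) ^ (-h) ≤ 2 ^ h * √(1 + b ^ 2) ^ (-h) := by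
  have hcomp : √(1 + b ^ 2) / 2 ≤ √(1 + α ^ 2) := by
    rw [le_sqrt (by positivity) (by positivity), div_pow, sq_sqrt (by positivity)]
    nlinarith
  calc √(1 + α ^ 2) ^ (-h) ≤ (√(1 + b ^ 2) / 2) ^ (-h) :=
        rpow_le_rpow_of_nonpos (by positivity) hcomp (by linarith)
    _ = 2 ^ h * √(1 + b ^ 2) ^ (-h) := by
        rw [div_rpow (by positivity) zero_le_two, rpow_neg zero_le_two, div_inv_eq_mul, mul_comm]

section NearCone

variable {p h L b : ℝ}

lemma integral_near_cone_inner_le {β : ℝ} (hp : 2 < p) (hh : 0 ≤ h) (hL : 0 < L) (hb : 0 ≤ b)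
    (hβ : b ≤ β) :
    ∫ α in (b / 2)..b, (L + β - α) ^ (1 - p) * √(1 + α ^ 2) ^ (-h)
      ≤ 2 ^ h * √(1 + b ^ 2) ^ (-h) * ((L + β - b) ^ (2 - p) / (p - 2)) := by
  set K := 2 ^ h * √(1 + b ^ 2) ^ (-h)
  have hbase : ∀ α ≤ b, 0 < L + β - α := fun α hα => by linarith
  have hint : IntervalIntegrable (fun α => K * (L + β - α) ^ (1 - p)) MeasureTheory.volume
      (b / 2) b := by
    refine ContinuousOn.intervalIntegrable (continuousOn_const.mul
      (ContinuousOn.rpow_const (by fun_prop) fun α hα => Or.inl (hbase α ?_).ne'))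
    exact (uIcc_of_le (by linarith : b / 2 ≤ b) ▸ hα).2
  calc ∫ α in (b / 2)..b, (L + β - α) ^ (1 - p) * √(1 + α ^ 2) ^ (-h)
      ≤ ∫ α in (b / 2)..b, K * (L + β - α) ^ (1 - p) := by
        refine intervalIntegral_mono_of_nonneg (by linarith) (fun α hα => ?_) (fun α hα => ?_) hint
        · exact mul_nonneg (rpow_nonneg (hbase α hα.2).le _) (by positivity)
        · rw [mul_comm]
          exact mul_le_mul_of_nonneg_right (rpow_neg_sqrt_one_add_sq_le hh hb hα.1.le)
            (rpow_nonneg (hbase α hα.2).le _)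
    _ = K * ∫ α in (b / 2)..b, (L + β - α) ^ (1 - p) := integral_const_mul _ _
    _ ≤ K * ((L + β - b) ^ (2 - p) / (p - 2)) :=
        mul_le_mul_of_nonneg_left (integral_sub_rpow_le hp (by linarith) (by linarith))
          (by positivity)

lemma integral_near_cone_le {B : ℝ} (hp : 3 < p) (hh : 0 ≤ h) (hL : 0 < L) (hb : 0 ≤ b)
    (hbB : b ≤ B) :
    ∫ β in b..B, ∫ α in (b / 2)..b, (L + β - α) ^ (1 - p) * √(1 + α ^ 2) ^ (-h)
      ≤ 2 ^ h * √(1 + b ^ 2) ^ (-h) * L ^ (3 - p) / ((p - 2) * (p - 3)) := by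
  set K := 2 ^ h * √(1 + b ^ 2) ^ (-h)
  have hint : IntervalIntegrable (fun β => K / (p - 2) * (L + β - b) ^ (2 - p))
      MeasureTheory.volume b B := by
    refine ContinuousOn.intervalIntegrable (continuousOn_const.mul
      (ContinuousOn.rpow_const (by fun_prop) fun β hβ => Or.inl (ne_of_gt ?_)))
    linarith [(uIcc_of_le hbB ▸ hβ).1]
  calc ∫ β in b..B, ∫ α in (b / 2)..b, (L + β - α) ^ (1 - p) * √(1 + α ^ 2) ^ (-h)
      ≤ ∫ β in b..B, K / (p - 2) * (L + β - b) ^ (2 - p) := by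
        refine intervalIntegral_mono_of_nonneg hbB (fun β hβ => ?_) (fun β hβ => ?_) hint
        · refine integral_nonneg (by linarith) fun α hα => ?_
          exact mul_nonneg (rpow_nonneg (by linarith [hα.2, hβ.1]) _) (by positivity)
        · exact (integral_near_cone_inner_le (by linarith) hh hL hb hβ.1.le).trans_eq (by ring)
    _ = K / (p - 2) * ∫ β in b..B, (L + β - b) ^ (2 - p) := integral_const_mul _ _
    _ ≤ K / (p - 2) * (L ^ (3 - p) / (p - 3)) :=
        mul_le_mul_of_nonneg_left (integral_add_sub_rpow_le hp hL hbB)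
          (div_nonneg (by positivity) (by linarith))
    _ = K * L ^ (3 - p) / ((p - 2) * (p - 3)) := div_mul_div_comm _ _ _ _

end NearCone

lemma eventually_log_one_div_rpow_lt {p : ℝ} (hp : 3 < p) (C : ℝ) {δ : ℝ} (hδ : 0 < δ) :
    ∀ᶠ ε in 𝓝[>] (0 : ℝ), 0 < log (1 / ε) ∧ C * log (1 / ε) ^ (3 - p) < δ := by
  have hL : Tendsto (fun ε : ℝ => log (1 / ε)) (𝓝[>] 0) atTop := by
    simpa only [one_div, Function.comp_def] using tendsto_log_atTop.comp tendsto_inv_nhdsGT_zero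
  have hsmall : Tendsto (fun ε : ℝ => C * log (1 / ε) ^ (3 - p)) (𝓝[>] 0) (𝓝 0) := by
    simpa [neg_sub] using ((tendsto_rpow_neg_atTop (by linarith : 0 < p - 3)).comp hL).const_mul C
  exact (hL.eventually_gt_atTop 0).and (hsmall.eventually (gt_mem_nhds hδ))

theorem claim_case2_general (p h : ℝ) (hp : 3 < p) (hh1 : 1 < h) :
    ∀ δ : ℝ, 0 < δ → ∃ ε₀ : ℝ, 0 < ε₀ ∧ ∀ ε : ℝ, 0 < ε → ε ≤ ε₀ →
      ∀ t r : ℝ, 1 ≤ r → r ≤ t →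
        (∫ β in (t - r)..(t + r), ∫ α in ((t - r)/2)..(t - r),
            (Real.log (1/ε) + β - α) ^ (1 - p) * (Real.sqrt (1 + α^2)) ^ (-h))
          ≤ δ * (Real.sqrt (1 + (t - r)^2)) ^ (-h) := by
  intro δ hδ
  obtain ⟨ε₀, hε₀, hsmall⟩ := mem_nhdsGT_iff_exists_Ioc_subset.1
    (eventually_log_one_div_rpow_lt hp (2 ^ h / ((p - 2) * (p - 3))) hδ)
  refine ⟨ε₀, hε₀, fun ε hε hεε₀ t r hr hrt => ?_⟩
  obtain ⟨hL, hLδ⟩ := hsmall ⟨hε, hεε₀⟩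
  calc _ ≤ 2 ^ h * √(1 + (t - r) ^ 2) ^ (-h) * log (1 / ε) ^ (3 - p) / ((p - 2) * (p - 3)) :=
        integral_near_cone_le hp (by linarith) hL (by linarith) (by linarith)
    _ = 2 ^ h / ((p - 2) * (p - 3)) * log (1 / ε) ^ (3 - p) * √(1 + (t - r) ^ 2) ^ (-h) := by
        ring
    _ ≤ δ * √(1 + (t - r) ^ 2) ^ (-h) := by gcongr

/-- ⟨α⟩ = √(1+α²), Case 2: 1 ≤ r ≤ t, near-cone part. -/
theorem claim_case2 (p h : ℝ) (hp : 3 < p) (hh1 : 1 < h) (hh2 : h < p - 2) :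
    ∀ δ : ℝ, 0 < δ → ∃ ε₀ : ℝ, 0 < ε₀ ∧ ∀ ε : ℝ, 0 < ε → ε ≤ ε₀ →
      ∀ t r : ℝ, 1 ≤ r → r ≤ t →
        (∫ β in (t - r)..(t + r), ∫ α in ((t - r)/2)..(t - r),
            (Real.log (1/ε) + β - α) ^ (1 - p) * (Real.sqrt (1 + α^2)) ^ (-h))
          ≤ δ * (Real.sqrt (1 + (t - r)^2)) ^ (-h) :=
  claim_case2_general p h hp hh1
end

section
/- Let p > 3 and h ∈ (1, p−2). For every δ > 0 there exists ε₀ > 0 such that for all ε ∈ (0, ε₀] and all r > t > 0: ∫_{r-t}^{t+r} ∫_{-β}^{t-r} ( ln(1/ε) + β − α )^{1-p} ⟨α⟩^{-h} dα dβ ≤ δ · ⟨r−t⟩^{-h} · tanh r / tanh(t+r). -/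
/-!
On the domain of integration `|α| ≥ r - t`, so the weight `⟨α⟩^(-h)` is at most `⟨r - t⟩^(-h)`
and can be pulled out. With `L = log (1/ε)`, the two remaining integrals of powers of
`L + β - α` are bounded by `L^(3-p) / ((p-2)(p-3))`, which tends to `0` with `ε` because `p > 3`.
Finally `tanh (t + r) ≤ tanh (2r) ≤ 2 tanh r`, so `tanh r / tanh (t + r) ≥ 1/2`.
-/

open intervalIntegral Real Set MeasureTheory

namespace Real

theorem tanh_monotone : Monotone tanh := by
  intro a b hab
  rw [tanh_eq_sinh_div_cosh, tanh_eq_sinh_div_cosh, div_le_div_iff₀ (cosh_pos _) (cosh_pos _)]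
  have hsub : 0 ≤ sinh (b - a) := sinh_nonneg_iff.2 (sub_nonneg.2 hab)
  rw [sinh_sub] at hsub
  linarith

theorem tanh_pos {x : ℝ} (hx : 0 < x) : 0 < tanh x := by
  rw [tanh_eq_sinh_div_cosh]
  exact div_pos (sinh_pos_iff.2 hx) (cosh_pos x)

theorem tanh_two_mul_le {x : ℝ} (hx : 0 ≤ x) : tanh (2 * x) ≤ 2 * tanh x := by
  have hsinh : 0 ≤ sinh x := sinh_nonneg_iff.2 hx
  have hcosh : 0 < cosh x := cosh_pos x
  rw [tanh_eq_sinh_div_cosh, tanh_eq_sinh_div_cosh, sinh_two_mul, cosh_two_mul, ← mul_div_assoc,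
    div_le_div_iff₀ (by positivity) hcosh]
  nlinarith

end Real

theorem one_half_le_tanh_div_tanh_add {t r : ℝ} (ht : 0 < t) (htr : t ≤ r) :
    1 / 2 ≤ tanh r / tanh (t + r) := by
  have hr : 0 < r := ht.trans_le htr
  have hle : tanh (t + r) ≤ 2 * tanh r :=
    (tanh_monotone (by linarith : t + r ≤ 2 * r)).trans (tanh_two_mul_le hr.le)
  rw [div_le_div_iff₀ two_pos (tanh_pos (by linarith))]
  linarith

theorem sqrt_one_add_sq_rpow_neg_le {c α h : ℝ} (hh : 0 ≤ h) (hcα : |c| ≤ |α|) :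
    √(1 + α ^ 2) ^ (-h) ≤ √(1 + c ^ 2) ^ (-h) :=
  rpow_le_rpow_of_nonpos (sqrt_pos.2 (by positivity))
    (sqrt_le_sqrt (by nlinarith [sq_le_sq.2 hcα])) (neg_nonpos.2 hh)

theorem integral_rpow_le_div_of_lt_neg_one {s a b : ℝ} (hs : s < -1) (ha : 0 < a) (hab : a ≤ b) :
    ∫ x in a..b, x ^ s ≤ a ^ (s + 1) / (-s - 1) := by
  rw [integral_of_le hab, show -s - 1 = -(s + 1) by ring, div_neg, ← neg_div,
    ← integral_Ioi_rpow_of_lt hs ha]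
  exact setIntegral_mono_set (integrableOn_Ioi_rpow_of_lt hs ha)
    (ae_restrict_of_forall_mem measurableSet_Ioi fun x hx => rpow_nonneg (ha.trans hx).le _)
    Ioc_subset_Ioi_self.eventuallyLE

theorem integral_rpow_one_sub_mul_bracket_le {L c β p h : ℝ} (hL : 0 < L) (hc : 0 ≤ c)
    (hcβ : c ≤ β) (hp : 2 < p) (hh : 0 ≤ h) :
    ∫ α in -β..-c, (L + β - α) ^ (1 - p) * √(1 + α ^ 2) ^ (-h)
      ≤ √(1 + c ^ 2) ^ (-h) * ((L + c + β) ^ (2 - p) / (p - 2)) := by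
  set C := √(1 + c ^ 2) ^ (-h)
  have hβc : -β ≤ -c := neg_le_neg hcβ
  have hbase : ∀ α ∈ uIcc (-β) (-c), L + β - α ≠ 0 := by
    intro α hα
    rw [uIcc_of_le hβc] at hα
    linarith [hα.2]
  have hpow : ContinuousOn (fun α => (L + β - α) ^ (1 - p)) (uIcc (-β) (-c)) :=
    ContinuousOn.rpow_const (by fun_prop) fun α hα => Or.inl (hbase α hα)
  have hbracket : Continuous fun α : ℝ => √(1 + α ^ 2) ^ (-h) :=
    Continuous.rpow_const (by fun_prop) fun α => Or.inl (sqrt_pos.2 (by positivity)).ne'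
  have hsubst :
      ∫ α in -β..-c, (L + β - α) ^ (1 - p) = ∫ u in L + c + β..L + β + β, u ^ (1 - p) := by
    rw [integral_comp_sub_left (fun u => u ^ (1 - p)), sub_neg_eq_add, sub_neg_eq_add,
      add_right_comm]
  have hint := integral_rpow_le_div_of_lt_neg_one (by linarith : 1 - p < -1)
    (by linarith : 0 < L + c + β) (by linarith : L + c + β ≤ L + β + β)
  rw [show 1 - p + 1 = 2 - p by ring, show -(1 - p) - 1 = p - 2 by ring] at hint
  calc ∫ α in -β..-c, (L + β - α) ^ (1 - p) * √(1 + α ^ 2) ^ (-h)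
      ≤ ∫ α in -β..-c, C * (L + β - α) ^ (1 - p) := by
        refine integral_mono_on hβc ((hpow.mul hbracket.continuousOn).intervalIntegrable)
          ((continuousOn_const.mul hpow).intervalIntegrable) fun α hα => ?_
        rw [mul_comm C]
        refine mul_le_mul_of_nonneg_left (sqrt_one_add_sq_rpow_neg_le hh ?_)
          (rpow_nonneg (by linarith [hα.2]) _)
        rw [abs_of_nonneg hc, abs_of_nonpos (by linarith [hα.2])]
        linarith [hα.2]
    _ = C * ∫ u in L + c + β..L + β + β, u ^ (1 - p) := by
        rw [intervalIntegral.integral_const_mul, hsubst]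
    _ ≤ C * ((L + c + β) ^ (2 - p) / (p - 2)) := by gcongr

theorem iteratedIntegral_rpow_one_sub_mul_bracket_le {L c b p h : ℝ} (hL : 0 < L) (hc : 0 ≤ c)
    (hcb : c ≤ b) (hp : 3 < p) (hh : 0 ≤ h) :
    ∫ β in c..b, ∫ α in -β..-c, (L + β - α) ^ (1 - p) * √(1 + α ^ 2) ^ (-h)
      ≤ √(1 + c ^ 2) ^ (-h) * L ^ (3 - p) / ((p - 2) * (p - 3)) := by
  set C := √(1 + c ^ 2) ^ (-h)
  have hC : 0 ≤ C := by positivity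
  have hbound : ContinuousOn (fun β => C * ((L + c + β) ^ (2 - p) / (p - 2))) (uIcc c b) := by
    refine continuousOn_const.mul (ContinuousOn.div_const (ContinuousOn.rpow_const (by fun_prop)
      fun β hβ => Or.inl ?_) _)
    rw [uIcc_of_le hcb] at hβ
    linarith [hβ.1]
  have hsubst : ∫ β in c..b, (L + c + β) ^ (2 - p) = ∫ u in L + c + c..L + c + b, u ^ (2 - p) :=
    integral_comp_add_left (fun u => u ^ (2 - p)) (L + c)
  have hint := integral_rpow_le_div_of_lt_neg_one (by linarith : 2 - p < -1)
    (by linarith : 0 < L + c + c) (by linarith : L + c + c ≤ L + c + b)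
  rw [show 2 - p + 1 = 3 - p by ring, show -(2 - p) - 1 = p - 3 by ring] at hint
  have hL' : (L + c + c) ^ (3 - p) ≤ L ^ (3 - p) :=
    rpow_le_rpow_of_nonpos hL (by linarith) (by linarith)
  calc ∫ β in c..b, ∫ α in -β..-c, (L + β - α) ^ (1 - p) * √(1 + α ^ 2) ^ (-h)
      ≤ ∫ β in c..b, C * ((L + c + β) ^ (2 - p) / (p - 2)) := by
        rw [integral_of_le hcb, integral_of_le hcb]
        refine integral_mono_of_nonneg (ae_restrict_of_forall_mem measurableSet_Ioc fun β hβ => ?_)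
          (hbound.intervalIntegrable.1)
          (ae_restrict_of_forall_mem measurableSet_Ioc fun β hβ =>
            integral_rpow_one_sub_mul_bracket_le hL hc hβ.1.le (by linarith) hh)
        exact intervalIntegral.integral_nonneg (by linarith [hβ.1]) fun α hα =>
          mul_nonneg (rpow_nonneg (by linarith [hα.1, hα.2]) _) (by positivity)
    _ = C / (p - 2) * ∫ u in L + c + c..L + c + b, u ^ (2 - p) := by
        simp only [mul_div_assoc', intervalIntegral.integral_div, intervalIntegral.integral_const_mul,
          hsubst]
        ring
    _ ≤ C / (p - 2) * (L ^ (3 - p) / (p - 3)) :=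
        mul_le_mul_of_nonneg_left (hint.trans (by gcongr)) (div_nonneg hC (by linarith))
    _ = C * L ^ (3 - p) / ((p - 2) * (p - 3)) := by field_simp

theorem exists_forall_log_one_div_rpow_neg_le {q D : ℝ} (hq : 0 < q) (hD : 0 < D) :
    ∃ ε₀ > 0, ∀ ε, 0 < ε → ε ≤ ε₀ → 0 < log (1 / ε) ∧ log (1 / ε) ^ (-q) ≤ D := by
  set M := D ^ (-q⁻¹)
  have hM : 0 < M := rpow_pos_of_pos hD _
  refine ⟨exp (-M), exp_pos _, fun ε hε hεε₀ => ?_⟩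
  have hML : M ≤ log (1 / ε) := by
    rw [one_div, log_inv, le_neg, ← log_exp (-M)]
    exact log_le_log hε hεε₀
  refine ⟨hM.trans_le hML, ?_⟩
  calc log (1 / ε) ^ (-q) ≤ M ^ (-q) := rpow_le_rpow_of_nonpos hM hML (by linarith)
    _ = D := by rw [← rpow_mul hD.le, neg_mul_neg, inv_mul_cancel₀ hq.ne', rpow_one]

theorem claim_case3_general (p h : ℝ) (hp : 3 < p) (hh1 : 1 < h) :
    ∀ δ : ℝ, 0 < δ → ∃ ε₀ : ℝ, 0 < ε₀ ∧ ∀ ε : ℝ, 0 < ε → ε ≤ ε₀ →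
      ∀ t r : ℝ, 0 < t → t < r →
        (∫ β in (r - t)..(t + r), ∫ α in (-β)..(t - r),
            (Real.log (1/ε) + β - α) ^ (1 - p) * (Real.sqrt (1 + α^2)) ^ (-h))
          ≤ δ * (Real.sqrt (1 + (r - t)^2)) ^ (-h) * Real.tanh r / Real.tanh (t + r) := by
  intro δ hδ
  have hp2 : 0 < p - 2 := by linarith
  have hp3 : 0 < p - 3 := by linarith
  obtain ⟨ε₀, hε₀, hε⟩ := exists_forall_log_one_div_rpow_neg_le (q := p - 3)
    (D := δ * ((p - 2) * (p - 3)) / 2) hp3 (by positivity)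
  refine ⟨ε₀, hε₀, fun ε hε0 hεε₀ t r ht htr => ?_⟩
  obtain ⟨hL, hLD⟩ := hε ε hε0 hεε₀
  rw [neg_sub] at hLD
  set C := √(1 + (r - t) ^ 2) ^ (-h)
  rw [show t - r = -(r - t) by ring]
  calc _ ≤ C * log (1 / ε) ^ (3 - p) / ((p - 2) * (p - 3)) :=
        iteratedIntegral_rpow_one_sub_mul_bracket_le hL (by linarith) (by linarith) hp (by linarith)
    _ ≤ C * (δ * ((p - 2) * (p - 3)) / 2) / ((p - 2) * (p - 3)) := by gcongr
    _ = δ * C * (1 / 2) := by field_simp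
    _ ≤ δ * C * (tanh r / tanh (t + r)) :=
        mul_le_mul_of_nonneg_left (one_half_le_tanh_div_tanh_add ht htr.le) (by positivity)
    _ = δ * C * tanh r / tanh (t + r) := by rw [mul_div_assoc]

/-- ⟨α⟩ = √(1+α²), Case 3: r > t. -/
theorem claim_case3 (p h : ℝ) (hp : 3 < p) (hh1 : 1 < h) (hh2 : h < p - 2) :
    ∀ δ : ℝ, 0 < δ → ∃ ε₀ : ℝ, 0 < ε₀ ∧ ∀ ε : ℝ, 0 < ε → ε ≤ ε₀ →
      ∀ t r : ℝ, 0 < t → t < r →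
        (∫ β in (r - t)..(t + r), ∫ α in (-β)..(t - r),
            (Real.log (1/ε) + β - α) ^ (1 - p) * (Real.sqrt (1 + α^2)) ^ (-h))
          ≤ δ * (Real.sqrt (1 + (r - t)^2)) ^ (-h) * Real.tanh r / Real.tanh (t + r) :=
  claim_case3_general p h hp hh1
end

section
/- Let q > 1, δ₀ ∈ (0,1), D₀ > 0, and suppose a sequence satisfies D_m ≥ δ₀ D_{m−1}^q / (32 m² q^{2(m−1)}) for all m ≥ 1. Set E = ln D₀ − Σ_{j=0}^∞ (2 ln(j+1) + 2 j ln q − ln(δ₀/32)) / q^{j+1}. Then the series defining E converges absolutely and D_m ≥ exp(E q^m) for every m ≥ 1. -/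
/-!
Taking logarithms turns the hypothesis into the linear recursion
`log D (n+1) ≥ q log D n - c n`, where `c n = 2 log (n+1) + 2 n log q - log (δ₀/32) ≥ 0`.
Unrolling it gives `log D m ≥ q^m (log D 0 - ∑_{j<m} c j / q^(j+1))`, and since `c` grows at most
linearly and `q > 1`, the partial sums increase to a convergent series.
-/

open Real Finset

section LinearRecursion

variable {q : ℝ} {L c : ℕ → ℝ}

theorem pow_mul_sub_sum_div_pow_le (hq : 0 < q) (h : ∀ n, q * L n - c n ≤ L (n + 1)) (m : ℕ) :
    q ^ m * (L 0 - ∑ j ∈ range m, c j / q ^ (j + 1)) ≤ L m := by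
  induction m with
  | zero => simp
  | succ n ih =>
    have hunroll : q ^ (n + 1) * (L 0 - ∑ j ∈ range (n + 1), c j / q ^ (j + 1))
        = q * (q ^ n * (L 0 - ∑ j ∈ range n, c j / q ^ (j + 1))) - c n := by
      rw [sum_range_succ]
      field_simp
      ring
    rw [hunroll]
    exact (sub_le_sub_right (mul_le_mul_of_nonneg_left ih hq.le) (c n)).trans (h n)

theorem sub_tsum_div_pow_mul_pow_le (hq : 0 < q) (hc : ∀ j, 0 ≤ c j)
    (hs : Summable fun j => c j / q ^ (j + 1)) (h : ∀ n, q * L n - c n ≤ L (n + 1)) (m : ℕ) :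
    (L 0 - ∑' j, c j / q ^ (j + 1)) * q ^ m ≤ L m := by
  have hpartial : ∑ j ∈ range m, c j / q ^ (j + 1) ≤ ∑' j, c j / q ^ (j + 1) :=
    hs.sum_le_tsum _ fun j _ => div_nonneg (hc j) (by positivity)
  calc (L 0 - ∑' j, c j / q ^ (j + 1)) * q ^ m
      ≤ q ^ m * (L 0 - ∑ j ∈ range m, c j / q ^ (j + 1)) := by
        rw [mul_comm]
        exact mul_le_mul_of_nonneg_left (sub_le_sub_left hpartial _) (by positivity)
    _ ≤ L m := pow_mul_sub_sum_div_pow_le hq h m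

end LinearRecursion

theorem summable_div_pow_of_abs_le {q A : ℝ} {c : ℕ → ℝ} (hq : 1 < q)
    (hc : ∀ j, |c j| ≤ A * (j + 1)) : Summable fun j => c j / q ^ (j + 1) := by
  have hr : ‖q⁻¹‖ < 1 := by
    rw [norm_inv, Real.norm_of_nonneg (by linarith)]
    exact inv_lt_one_of_one_lt₀ hq
  have hgeom : Summable fun j : ℕ => ((j : ℝ) + 1) * q⁻¹ ^ (j + 1) := by
    have hpow : Summable fun n : ℕ => (n : ℝ) * q⁻¹ ^ n := by
      simpa using summable_pow_mul_geometric_of_norm_lt_one 1 hr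
    simpa using (summable_nat_add_iff 1).2 hpow
  refine Summable.of_norm_bounded (hgeom.mul_left A) fun j => ?_
  rw [norm_div, norm_pow, Real.norm_of_nonneg (by linarith : (0 : ℝ) ≤ q), div_eq_mul_inv,
    ← inv_pow, ← mul_assoc]
  exact mul_le_mul_of_nonneg_right (hc j) (by positivity)

noncomputable def doublingLoss (q δ : ℝ) (j : ℕ) : ℝ :=
  2 * log ((j : ℝ) + 1) + 2 * (j : ℝ) * log q - log (δ / 32)

section DoublingLoss

variable {q δ : ℝ}

theorem doublingLoss_nonneg (hq : 1 ≤ q) (hδ : 0 < δ) (hδ32 : δ ≤ 32) (j : ℕ) :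
    0 ≤ doublingLoss q δ j := by
  have hlogj : 0 ≤ log ((j : ℝ) + 1) := log_nonneg (by linarith [j.cast_nonneg (α := ℝ)])
  have hlogq : 0 ≤ (j : ℝ) * log q := mul_nonneg j.cast_nonneg (log_nonneg hq)
  have hlogδ : log (δ / 32) ≤ 0 := log_nonpos (by positivity) (by linarith)
  unfold doublingLoss
  linarith

theorem doublingLoss_le (hq : 1 ≤ q) (hδ : 0 < δ) (hδ32 : δ ≤ 32) (j : ℕ) :
    doublingLoss q δ j ≤ (2 + 2 * log q - log (δ / 32)) * (j + 1) := by
  have hj : (0 : ℝ) ≤ j := j.cast_nonneg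
  have hlogj : log ((j : ℝ) + 1) ≤ j := by
    linarith [log_le_sub_one_of_pos (x := (j : ℝ) + 1) (by positivity)]
  have hlogq : 0 ≤ log q := log_nonneg hq
  have hlogδ : log (δ / 32) ≤ 0 := log_nonpos (by positivity) (by linarith)
  unfold doublingLoss
  nlinarith

theorem summable_doublingLoss_div_pow (hq : 1 < q) (hδ : 0 < δ) (hδ32 : δ ≤ 32) :
    Summable fun j => doublingLoss q δ j / q ^ (j + 1) :=
  summable_div_pow_of_abs_le hq fun j => by
    rw [abs_of_nonneg (doublingLoss_nonneg hq.le hδ hδ32 j)]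
    exact doublingLoss_le hq.le hδ hδ32 j

theorem log_doubling_bound {x : ℝ} (hq : 0 < q) (hδ : 0 < δ) (hx : 0 < x) (n : ℕ) :
    log (δ * x ^ q / (32 * ((n : ℝ) + 1) ^ 2 * q ^ (2 * n))) = q * log x - doublingLoss q δ n := by
  have hn : (0 : ℝ) < (n : ℝ) + 1 := by positivity
  rw [log_div (by positivity) (by positivity), log_mul hδ.ne' (by positivity), log_rpow hx,
    log_mul (by positivity) (by positivity), log_mul (by norm_num) (by positivity), log_pow,
    log_pow, doublingLoss, log_div hδ.ne' (by norm_num)]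
  push_cast
  ring

end DoublingLoss

theorem doubling_lower_bound (q δ₀ : ℝ) (hq : 1 < q) (hδ : 0 < δ₀) (hδ1 : δ₀ < 1)
    (D : ℕ → ℝ) (hD0 : 0 < D 0)
    (hD : ∀ m : ℕ, 1 ≤ m →
      D m ≥ δ₀ * (D (m - 1)) ^ q / (32 * (m : ℝ) ^ 2 * q ^ (2 * (m - 1)))) :
    Summable (fun j : ℕ =>
        (2 * Real.log ((j : ℝ) + 1) + 2 * (j : ℝ) * Real.log q - Real.log (δ₀ / 32))
          / q ^ (j + 1)) ∧
    ∀ m : ℕ, 1 ≤ m →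
      D m ≥ Real.exp ((Real.log (D 0) - ∑' j : ℕ,
        (2 * Real.log ((j : ℝ) + 1) + 2 * (j : ℝ) * Real.log q - Real.log (δ₀ / 32))
          / q ^ (j + 1)) * q ^ m) := by
  have hq0 : 0 < q := by linarith
  have hδ32 : δ₀ ≤ 32 := by linarith
  have hstep (n : ℕ) : δ₀ * D n ^ q / (32 * ((n : ℝ) + 1) ^ 2 * q ^ (2 * n)) ≤ D (n + 1) := by
    simpa using hD (n + 1) n.succ_pos
  have hpos (n : ℕ) : 0 < D n := by
    induction n with
    | zero => exact hD0
    | succ n ih => exact lt_of_lt_of_le (by positivity) (hstep n)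
  have hlog (n : ℕ) : q * log (D n) - doublingLoss q δ₀ n ≤ log (D (n + 1)) := by
    rw [← log_doubling_bound hq0 hδ (hpos n)]
    exact log_le_log (by have := hpos n; positivity) (hstep n)
  have hsum := summable_doublingLoss_div_pow hq hδ hδ32
  refine ⟨hsum, fun m _ => ?_⟩
  calc exp ((log (D 0) - ∑' j, doublingLoss q δ₀ j / q ^ (j + 1)) * q ^ m)
      ≤ exp (log (D m)) :=
        exp_le_exp.2 <|
          sub_tsum_div_pow_mul_pow_le hq0 (doublingLoss_nonneg hq.le hδ hδ32) hsum hlog m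
    _ = D m := exp_log (hpos m)
end
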